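/- In the gap-rule setting with correlated normal increments — X_1 multivariate normal with E[X_{1,k}] = μ_+ > 0 for k ∈ [m], E[X_{1,k}] = μ_- < 0 for k ∉ [m], Var(X_{1,k}) = σ² and Cov(X_{1,k},X_{1,k'}) = σ²ρ for k ≠ k', where σ² > 0 and ρ ∈ [0,1) — for any ℓ ∈ [m] and ℓ' ∉ [m], setting A := ([m]\{ℓ}) ∪ {ℓ'}, one has r_A = z̃_{ℓ,ℓ'} and β^A = γ̃^{ℓ,ℓ'}; explicitly, γ̃^{ℓ,ℓ'}_ℓ = −(μ_+ − μ_-)/(σ²(1−ρ)), γ̃^{ℓ,ℓ'}_{ℓ'} = (μ_+ − μ_-)/(σ²(1−ρ)), and γ̃^{ℓ,ℓ'}_k = 0 for k ∉ {ℓ,ℓ'}. -/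

import Mathlib

/-!
Write `D = μ₊ - μ₋`, `s = σ²(1 - ρ)`, `c = D / s` and `θ* = c (e_{ℓ'} - e_ℓ)`. Swapping the
coordinates `ℓ` and `ℓ'` of the mean `μ` gives `v = μ + s θ*`, and completing the square in
`Λ(θ) ≥ θ·μ + (s/2)|θ|²` yields `θ·v ≤ Λ(θ) + (s/2)|θ*|² - (s/2)|θ - θ*|²`. Hence `θ·v ≤ cD`
whenever `Λ(θ) ≤ 0`, with equality only at `θ = θ*`, and `Λ(θ*) = 0`. As `t v ∈ W^A` for
`tD > 1` and `θ*·x = c (x_{ℓ'} - x_ℓ) > c` on `W^A`, this gives `r_A = c`. The lower bound in the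
definition of `β^A` then forces `β^A·v ≥ cD`, so `β^A = θ*`; and on the line `θ = u (e_{ℓ'} - e_ℓ)`
of the two-index problem, `θ·v = uD`, so its maximizer is `θ*` too.
-/

open MeasureTheory ProbabilityTheory Filter Set Topology
open scoped ENNReal Pointwise RealInnerProductSpace Classical

noncomputable section

namespace Paper

abbrev Vec (d : ℕ) := EuclideanSpace ℝ (Fin d)

variable {d : ℕ}

/-- The cone generated by a set: `{λ x : λ > 0, x ∈ A}`. -/
def cone (A : Set (Vec d)) : Set (Vec d) := {y | ∃ l : ℝ, 0 < l ∧ ∃ x ∈ A, y = l • x}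

variable {Ω : Type*} [MeasurableSpace Ω]

/-- The random walk `S_n = X_0 + ⋯ + X_{n-1}`. -/
def S (X : ℕ → Ω → Vec d) (n : ℕ) (ω : Ω) : Vec d := ∑ i ∈ Finset.range n, X i ω

/-- The cumulant generating function `Λ(θ) = log E[exp⟪θ, X₁⟫]` (real-valued on its domain). -/
def cgf (P : Measure Ω) (X : ℕ → Ω → Vec d) (θ : Vec d) : ℝ :=
  Real.log (∫ ω, Real.exp ⟪θ, X 0 ω⟫ ∂P)

/-- `θ` belongs to the effective domain of `Λ`. -/
def InDom (P : Measure Ω) (X : ℕ → Ω → Vec d) (θ : Vec d) : Prop :=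
  Integrable (fun ω => Real.exp ⟪θ, X 0 ω⟫) P

/-- The effective domain of the Legendre–Fenchel conjugate `Λ*`. -/
def domConj (P : Measure Ω) (X : ℕ → Ω → Vec d) : Set (Vec d) :=
  {x | BddAbove ((fun θ => ⟪θ, x⟫ - cgf P X θ) '' {θ | InDom P X θ})}

/-- The rate function `I(x) = sup{θ·x : Λ(θ) ≤ 0}`, valued in `[0,∞]`. -/
def rate (P : Measure Ω) (X : ℕ → Ω → Vec d) (x : Vec d) : ℝ≥0∞ :=
  ⨆ θ ∈ {θ : Vec d | InDom P X θ ∧ cgf P X θ ≤ 0}, ENNReal.ofReal ⟪θ, x⟫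

/-- `r_W = inf_{x ∈ W} I(x)`. -/
def rOf (P : Measure Ω) (X : ℕ → Ω → Vec d) (W : Set (Vec d)) : ℝ≥0∞ :=
  ⨅ x ∈ W, rate P X x

/-- The first hitting time of `b • W` by the random walk. -/
def hit (X : ℕ → Ω → Vec d) (W : Set (Vec d)) (b : ℝ) (ω : Ω) : ℕ∞ :=
  ⨅ (n : ℕ) (_ : S X n ω ∈ b • W), (n : ℕ∞)

/-- The basic i.i.d. random walk hypotheses. -/
def IIDWalk (P : Measure Ω) (X : ℕ → Ω → Vec d) : Prop :=
  IsProbabilityMeasure P ∧ (∀ n, Measurable (X n)) ∧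
    iIndepFun X P ∧ ∀ n, P.map (X n) = P.map (X 0)

/-- The exponentially tilted step distribution `μ_θ`. -/
def tiltedLaw (P : Measure Ω) (X : ℕ → Ω → Vec d) (θ : Vec d) : Measure (Vec d) :=
  (P.map (X 0)).withDensity fun x => ENNReal.ofReal (Real.exp (⟪θ, x⟫ - cgf P X θ))

/-- `Q θ` is, for each `θ ∈ dom Λ`, a probability measure under which the increments
are i.i.d. with the tilted law `μ_θ`, i.e. `Q θ = ℙ_θ`. -/
def IsTiltedFamily (P : Measure Ω) (X : ℕ → Ω → Vec d) (Q : Vec d → Measure Ω) : Prop :=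
  ∀ θ : Vec d, InDom P X θ →
    IsProbabilityMeasure (Q θ) ∧
    iIndepFun X (Q θ) ∧
    ∀ n, (Q θ).map (X n) = tiltedLaw P X θ

/-- The likelihood ratio `L_θ(T) = exp(θ·S_T − T Λ(θ)) 1{T < ∞}`. -/
def LR (P : Measure Ω) (X : ℕ → Ω → Vec d) (θ : Vec d) (T : Ω → ℕ∞) (ω : Ω) : ℝ :=
  if T ω = ⊤ then 0
  else Real.exp (⟪θ, S X (T ω).toNat ω⟫ - ((T ω).toNat : ℝ) * cgf P X θ)

/-- `V_θ(x) = sup{α·x : Λ(θ) + Λ(α−θ) ≤ 0}`, with `sup ∅ = −∞`. -/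
def Vfun (P : Measure Ω) (X : ℕ → Ω → Vec d) (θ x : Vec d) : EReal :=
  ⨆ α ∈ {α : Vec d | InDom P X θ ∧ InDom P X (α - θ) ∧ cgf P X θ + cgf P X (α - θ) ≤ 0},
    ((⟪α, x⟫ : ℝ) : EReal)

/-- `v(W; θ) = inf_{x ∈ cl W} V_θ(x)`. -/
def vOf (P : Measure Ω) (X : ℕ → Ω → Vec d) (W : Set (Vec d)) (θ : Vec d) : EReal :=
  ⨅ x ∈ closure W, Vfun P X θ x

/-- The mixture measure `ℙ_Θ = |Θ|⁻¹ ∑_{θ∈Θ} ℙ_θ`. -/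
def mix (Q : Vec d → Measure Ω) (Θ : Finset (Vec d)) : Measure Ω :=
  (Θ.card : ℝ≥0∞)⁻¹ • ∑ θ ∈ Θ, Q θ

/-- Second moment `E_μ[f²]`. -/
def mom2 (μ : Measure Ω) (f : Ω → ℝ) : ℝ :=
  (∫⁻ ω, ENNReal.ofReal ((f ω) ^ 2) ∂μ).toReal

variable {J : ℕ}

/-- `τ_b^* = min_{j ∈ [J]} τ_b^j`. -/
def tauStar (X : ℕ → Ω → Vec d) (W : Fin J → Set (Vec d)) (b : ℝ) (ω : Ω) : ℕ∞ :=
  ⨅ j, hit X (W j) b ω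

/-- The wrong-exit event `{τ_b^* < τ_b^0}`. -/
def wrongExit (X : ℕ → Ω → Vec d) (W0 : Set (Vec d)) (W : Fin J → Set (Vec d)) (b : ℝ) :
    Set Ω :=
  {ω | tauStar X W b ω < hit X W0 b ω}

/-- The event `{τ_b^* = τ_b^j}`. -/
def exitAt (X : ℕ → Ω → Vec d) (W : Fin J → Set (Vec d)) (j : Fin J) (b : ℝ) : Set Ω :=
  {ω | tauStar X W b ω = hit X (W j) b ω}

/-- The estimator `Ŵ_b^j(θ)`. -/
def WhatJ (P : Measure Ω) (X : ℕ → Ω → Vec d) (W0 : Set (Vec d)) (W : Fin J → Set (Vec d))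
    (θ : Vec d) (j : Fin J) (b : ℝ) : Ω → ℝ :=
  Set.indicator (wrongExit X W0 W b ∩ exitAt X W j b)
    (fun ω => (LR P X θ (tauStar X W b) ω)⁻¹)

/-- The mixture estimator `Ŵ_b(Θ)`. -/
def WhatMix (P : Measure Ω) (X : ℕ → Ω → Vec d) (W0 : Set (Vec d)) (W : Fin J → Set (Vec d))
    (Θ : Finset (Vec d)) (b : ℝ) : Ω → ℝ :=
  Set.indicator (wrongExit X W0 W b)
    (fun ω => ((Θ.card : ℝ)⁻¹ * ∑ θ ∈ Θ, LR P X θ (tauStar X W b) ω)⁻¹)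

/-- Asymptotic efficiency of the proposal `ℙ_Θ` for estimating `ℙ(τ_b^* < τ_b^0)`. -/
def AsympEff (P : Measure Ω) (X : ℕ → Ω → Vec d) (W0 : Set (Vec d))
    (W : Fin J → Set (Vec d)) (Q : Vec d → Measure Ω) (Θ : Finset (Vec d)) : Prop :=
  Tendsto (fun b : ℝ =>
      Real.log (mom2 (mix Q Θ) (WhatMix P X W0 W Θ b)) /
        (2 * Real.log ((P (wrongExit X W0 W b)).toReal)))
    atTop (nhds 1)

/-- Condition (C1). -/
def C1 (P : Measure Ω) (X : ℕ → Ω → Vec d) (W : Fin J → Set (Vec d)) : Prop :=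
  ∃ δ > (0 : ℝ), ∀ j, cone (Metric.ball (∫ ω, X 0 ω ∂P) δ) ∩ W j = ∅

/-- Condition (C2). -/
def C2 (P : Measure Ω) (X : ℕ → Ω → Vec d) (W : Fin J → Set (Vec d)) : Prop :=
  IsOpen {θ : Vec d | InDom P X θ} ∧
    ∀ j, (interior (cone (domConj P X)) ∩ W j).Nonempty

/-- Condition (C3). -/
def C3 (W0 : Set (Vec d)) (W : Fin J → Set (Vec d)) : Prop :=
  (∀ j j', j ≠ j' → cone (W j) ∩ cone (W j') = ∅) ∧
  (∀ j, cone W0 ∩ cone (W j) = ∅) ∧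
  ∃ δ > (0 : ℝ), Metric.ball (0 : Vec d) δ ∩ W0 = ∅ ∧
    ∀ j, Metric.ball (0 : Vec d) δ ∩ W j = ∅

/-- Condition (C4). -/
def C4 (P : Measure Ω) (X : ℕ → Ω → Vec d) (W0 : Set (Vec d))
    (W : Fin J → Set (Vec d)) : Prop :=
  (∀ j j', j ≠ j' → closure (cone (W j)) ∩ closure (cone (W j')) = {0}) ∧
  (W0 = ∅ ∨ ∀ j, closure (cone W0) ∩ closure (cone (W j)) = {0}) ∧
  (W0 = ∅ ∨ (Convex ℝ W0 ∧ (interior (cone (domConj P X)) ∩ W0).Nonempty))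

/-- The sets `W^0, W^1, …, W^J` are open and pairwise disjoint, with `W^1, …, W^J` convex. -/
def GoodSets (W0 : Set (Vec d)) (W : Fin J → Set (Vec d)) : Prop :=
  IsOpen W0 ∧ (∀ j, IsOpen (W j)) ∧ (∀ j, Convex ℝ (W j)) ∧
  (∀ j, Disjoint W0 (W j)) ∧ ∀ j j', j ≠ j' → Disjoint (W j) (W j')

/-- `β` is the optimal tilting associated with the region `Wj` (Definition 3.1). -/
def IsOptTilt (P : Measure Ω) (X : ℕ → Ω → Vec d) (Wj : Set (Vec d)) (β : Vec d) : Prop :=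
  InDom P X β ∧ cgf P X β = 0 ∧
  (∀ v ∈ Wj, ((rOf P X Wj : ℝ≥0∞) : EReal) ≤ ((⟪β, v⟫ : ℝ) : EReal)) ∧
  (∀ x : Vec d, rate P X x ≤ rOf P X Wj →
    ((⟪β, x⟫ : ℝ) : EReal) ≤ ((rOf P X Wj : ℝ≥0∞) : EReal))

/-! ### The gap rule -/

/-- The index set `[m] = {1, …, m}` inside `Fin d`. -/
def Im (d m : ℕ) : Finset (Fin d) := Finset.univ.filter (fun k => (k : ℕ) < m)

/-- The region `W^A = {x : x_k − x_{k'} > 1 for all k ∈ A, k' ∉ A}`. -/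
def WGap (A : Finset (Fin d)) : Set (Vec d) :=
  {x | ∀ k ∈ A, ∀ k' ∉ A, 1 < x k - x k'}

/-- `τ_b^* = min_{A ∈ G_m^-} τ_b^A` for the gap rule. -/
def tauGapStar (X : ℕ → Ω → Vec d) (m : ℕ) (b : ℝ) (ω : Ω) : ℕ∞ :=
  ⨅ (A : Finset (Fin d)) (_ : A.card = m ∧ A ≠ Im d m), hit X (WGap A) b ω

/-- The wrong-exit event `{τ_b^* < τ_b^{[m]}}` for the gap rule. -/
def wrongExitGap (X : ℕ → Ω → Vec d) (m : ℕ) (b : ℝ) : Set Ω :=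
  {ω | tauGapStar X m b ω < hit X (WGap (Im d m)) b ω}

/-- The mixture estimator `Ŵ_b(Θ)` for the gap rule. -/
def WhatGap (P : Measure Ω) (X : ℕ → Ω → Vec d) (m : ℕ) (Θ : Finset (Vec d)) (b : ℝ) :
    Ω → ℝ :=
  Set.indicator (wrongExitGap X m b)
    (fun ω => ((Θ.card : ℝ)⁻¹ * ∑ θ ∈ Θ, LR P X θ (tauGapStar X m b) ω)⁻¹)

/-- Asymptotic efficiency of `ℙ_Θ` for the gap rule. -/
def AsympEffGap (P : Measure Ω) (X : ℕ → Ω → Vec d) (m : ℕ) (Q : Vec d → Measure Ω)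
    (Θ : Finset (Vec d)) : Prop :=
  Tendsto (fun b : ℝ =>
      Real.log (mom2 (mix Q Θ) (WhatGap P X m Θ b)) /
        (2 * Real.log ((P (wrongExitGap X m b)).toReal)))
    atTop (nhds 1)

/-- The standing assumptions for the gap rule. -/
def GapSetting (P : Measure Ω) (X : ℕ → Ω → Vec d) (m : ℕ) : Prop :=
  IIDWalk P X ∧ 2 ≤ m ∧ m + 2 ≤ d ∧
  (∀ k : Fin d, (k : ℕ) < m → 0 < ∫ ω, X 0 ω k ∂P) ∧
  (∀ k : Fin d, m ≤ (k : ℕ) → ∫ ω, X 0 ω k ∂P < 0) ∧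
  IsOpen {θ : Vec d | InDom P X θ} ∧
  ∀ A : Finset (Fin d), A.card = m → A ≠ Im d m →
    (interior (cone (domConj P X)) ∩ WGap A).Nonempty

/-- The feasible set of the optimization problem characterizing `r_A` and `β^A` for the
gap rule. -/
def GapFeas (P : Measure Ω) (X : ℕ → Ω → Vec d) (A : Finset (Fin d)) (θ : Vec d) : Prop :=
  InDom P X θ ∧ cgf P X θ ≤ 0 ∧ (∑ i : Fin d, θ i) = 0 ∧
    (∀ k ∈ A, 0 ≤ θ k) ∧ ∀ k ∉ A, θ k ≤ 0

/-- The feasible set of the two-index problem defining `z̃_{ℓ,ℓ'}` and `γ̃^{ℓ,ℓ'}`. -/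
def GapFeas2 (P : Measure Ω) (X : ℕ → Ω → Vec d) (l l' : Fin d) (θ : Vec d) : Prop :=
  InDom P X θ ∧ cgf P X θ ≤ 0 ∧ θ l + θ l' = 0 ∧ θ l ≤ 0 ∧ 0 ≤ θ l' ∧
    ∀ k, k ≠ l → k ≠ l' → θ k = 0

/-- `zv` and `γ` are the optimal value and a maximizer of the two-index problem. -/
def IsGapOpt2 (P : Measure Ω) (X : ℕ → Ω → Vec d) (l l' : Fin d)
    (zv : ℝ) (γ : Vec d) : Prop :=
  GapFeas2 P X l l' γ ∧ γ l' = zv ∧ ∀ θ, GapFeas2 P X l l' θ → θ l' ≤ zv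

/-- The feasible set of the four-index problem defining `s̃` and its maximizer. -/
def GapFeas4 (P : Measure Ω) (X : ℕ → Ω → Vec d) (l1 l2 l1' l2' : Fin d) (θ : Vec d) :
    Prop :=
  InDom P X θ ∧ cgf P X θ ≤ 0 ∧ θ l1 + θ l2 + θ l1' + θ l2' = 0 ∧
    θ l1 ≤ 0 ∧ θ l2 ≤ 0 ∧ 0 ≤ θ l1' ∧ 0 ≤ θ l2' ∧
    ∀ k, k ≠ l1 → k ≠ l2 → k ≠ l1' → k ≠ l2' → θ k = 0

/-- `sv` and `γ` are the optimal value and a maximizer of the four-index problem. -/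
def IsGapOpt4 (P : Measure Ω) (X : ℕ → Ω → Vec d) (l1 l2 l1' l2' : Fin d)
    (sv : ℝ) (γ : Vec d) : Prop :=
  GapFeas4 P X l1 l2 l1' l2' γ ∧ γ l1' + γ l2' = sv ∧
    ∀ θ, GapFeas4 P X l1 l2 l1' l2' θ → θ l1' + θ l2' ≤ sv

/-- The singleton swap `A = ([m] \ {k}) ∪ {k'}` of `G_m^1`. -/
def GapSwap (d m : ℕ) (k k' : Fin d) : Finset (Fin d) := insert k' (Im d m \ {k})

/-- `min_{A ∈ G_m^1} r_A`. -/
def rG1 (P : Measure Ω) (X : ℕ → Ω → Vec d) (m : ℕ) : ℝ≥0∞ :=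
  ⨅ (k : Fin d) (_ : (k : ℕ) < m) (k' : Fin d) (_ : m ≤ (k' : ℕ)),
    rOf P X (WGap (GapSwap d m k k'))

/-- `r_* = min_{A ∈ G_m^-} r_A`. -/
def rStarGap (P : Measure Ω) (X : ℕ → Ω → Vec d) (m : ℕ) : ℝ≥0∞ :=
  ⨅ (A : Finset (Fin d)) (_ : A.card = m ∧ A ≠ Im d m), rOf P X (WGap A)

section CompletingTheSquare

variable {E : Type*} [NormedAddCommGroup E] [InnerProductSpace ℝ E]

theorem inner_add_smul_eq (μ θ θ' : E) (s : ℝ) :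
    ⟪θ, μ + s • θ'⟫ =
      ⟪θ, μ⟫ + s / 2 * ‖θ‖ ^ 2 + s / 2 * ‖θ'‖ ^ 2 - s / 2 * ‖θ - θ'‖ ^ 2 := by
  rw [inner_add_right, real_inner_smul_right, norm_sub_sq_real]
  ring

theorem inner_add_smul_le_of_nonpos {μ θ : E} {s : ℝ} (θ' : E) (hs : 0 ≤ s)
    (hθ : ⟪θ, μ⟫ + s / 2 * ‖θ‖ ^ 2 ≤ 0) : ⟪θ, μ + s • θ'⟫ ≤ s / 2 * ‖θ'‖ ^ 2 := by
  rw [inner_add_smul_eq]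
  nlinarith [mul_nonneg hs (sq_nonneg ‖θ - θ'‖)]

theorem eq_of_le_inner_add_smul {μ θ θ' : E} {s : ℝ} (hs : 0 < s)
    (hθ : ⟪θ, μ⟫ + s / 2 * ‖θ‖ ^ 2 ≤ 0) (h : s / 2 * ‖θ'‖ ^ 2 ≤ ⟪θ, μ + s • θ'⟫) :
    θ = θ' := by
  rw [inner_add_smul_eq] at h
  have hsq : ‖θ - θ'‖ ^ 2 ≤ 0 := by nlinarith
  rw [← sub_eq_zero, ← norm_eq_zero]
  nlinarith [norm_nonneg (θ - θ')]

end CompletingTheSquare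

theorem le_of_forall_lt_of_continuousAt {α : Type*} [TopologicalSpace α] [LinearOrder α]
    [ClosedIciTopology α] {f : ℝ → α} {a : ℝ} {b : α} (hf : ContinuousAt f a)
    (h : ∀ t, a < t → b ≤ f t) : b ≤ f a :=
  ge_of_tendsto (hf.tendsto.mono_left nhdsWithin_le_nhds)
    (eventually_nhdsWithin_of_forall (s := Ioi a) h)

section RateFunction

variable {P : Measure Ω} {X : ℕ → Ω → Vec d}

theorem ofReal_inner_le_rate {θ : Vec d} (hdom : InDom P X θ) (hθ : cgf P X θ ≤ 0)
    (x : Vec d) : ENNReal.ofReal ⟪θ, x⟫ ≤ rate P X x :=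
  le_iSup₂ (f := fun θ (_ : θ ∈ {θ : Vec d | InDom P X θ ∧ cgf P X θ ≤ 0}) =>
    ENNReal.ofReal ⟪θ, x⟫) θ ⟨hdom, hθ⟩

theorem rate_le_ofReal {x : Vec d} {r : ℝ}
    (h : ∀ θ, InDom P X θ → cgf P X θ ≤ 0 → ⟪θ, x⟫ ≤ r) : rate P X x ≤ ENNReal.ofReal r :=
  iSup₂_le fun θ hθ => ENNReal.ofReal_le_ofReal (h θ hθ.1 hθ.2)

theorem rOf_eq_ofReal_of_ray {W : Set (Vec d)} {θ₀ v : Vec d} {c D : ℝ} (hD : 0 < D)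
    (hdom : InDom P X θ₀) (hθ₀ : cgf P X θ₀ ≤ 0) (hW : ∀ x ∈ W, c ≤ ⟪θ₀, x⟫)
    (hray : ∀ t, D⁻¹ < t → t • v ∈ W)
    (hv : ∀ θ, InDom P X θ → cgf P X θ ≤ 0 → ⟪θ, v⟫ ≤ c * D) :
    rOf P X W = ENNReal.ofReal c := by
  refine le_antisymm ?_ (le_iInf₂ fun x hx =>
    (ENNReal.ofReal_le_ofReal (hW x hx)).trans (ofReal_inner_le_rate hdom hθ₀ x))
  have hray_rate : ∀ t, D⁻¹ < t → rOf P X W ≤ ENNReal.ofReal (t * (c * D)) := fun t ht =>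
    (iInf₂_le _ (hray t ht)).trans <| rate_le_ofReal fun θ hd hθ => by
      rw [real_inner_smul_right]
      exact mul_le_mul_of_nonneg_left (hv θ hd hθ) ((inv_pos.2 hD).trans ht).le
  have h := le_of_forall_lt_of_continuousAt (f := fun t => ENNReal.ofReal (t * (c * D)))
    (ENNReal.continuous_ofReal.comp (continuous_mul_const _)).continuousAt hray_rate
  rwa [mul_comm c, inv_mul_cancel_left₀ hD.ne'] at h

theorem le_inner_of_isOptTilt {W : Set (Vec d)} {β v : Vec d} {c D : ℝ} (hD : 0 < D)
    (hc : 0 ≤ c) (hβ : IsOptTilt P X W β) (hr : rOf P X W = ENNReal.ofReal c)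
    (hray : ∀ t, D⁻¹ < t → t • v ∈ W) : c * D ≤ ⟪β, v⟫ := by
  have hray_inner : ∀ t, D⁻¹ < t → c ≤ t * ⟪β, v⟫ := fun t ht => by
    have h := hβ.2.2.1 _ (hray t ht)
    rw [hr, EReal.coe_ennreal_ofReal, max_eq_left hc, real_inner_smul_right] at h
    exact_mod_cast h
  have h := le_of_forall_lt_of_continuousAt (by fun_prop) hray_inner
  rwa [inv_mul_eq_div, le_div_iff₀ hD] at h

end RateFunction

section GapGeometry

def meanOn (A : Finset (Fin d)) (a b : ℝ) : Vec d :=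
  WithLp.toLp 2 fun k => if k ∈ A then a else b

def swapDir (l l' : Fin d) : Vec d := EuclideanSpace.single l' 1 - EuclideanSpace.single l 1

variable {m : ℕ} {l l' : Fin d}

theorem mem_Im {k : Fin d} : k ∈ Im d m ↔ (k : ℕ) < m := by
  simp [Im]

theorem ne_of_val_lt_of_le (hl : (l : ℕ) < m) (hl' : m ≤ (l' : ℕ)) : l ≠ l' := by
  rintro rfl
  omega

theorem meanOn_apply (A : Finset (Fin d)) (a b : ℝ) (k : Fin d) :
    meanOn A a b k = if k ∈ A then a else b :=
  rfl

theorem inner_meanOn (θ : Vec d) (A : Finset (Fin d)) (a b : ℝ) :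
    ⟪θ, meanOn A a b⟫ = ∑ k, θ k * if k ∈ A then a else b := by
  simp [PiLp.inner_apply, meanOn_apply, mul_comm]

theorem smul_meanOn_mem_WGap (A : Finset (Fin d)) {a b t : ℝ} (hab : 0 < a - b)
    (ht : (a - b)⁻¹ < t) : t • meanOn A a b ∈ WGap A := by
  intro k hk k' hk'
  simp only [PiLp.smul_apply, meanOn_apply, if_pos hk, if_neg hk', smul_eq_mul]
  have := (inv_lt_iff_one_lt_mul₀ hab).1 ht
  linarith

theorem swapDir_apply (k : Fin d) :
    swapDir l l' k = (if k = l' then 1 else 0) - if k = l then 1 else 0 := by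
  simp [swapDir, PiLp.single_apply]

theorem inner_swapDir_left (x : Vec d) : ⟪swapDir l l', x⟫ = x l' - x l := by
  simp [swapDir, inner_sub_left, EuclideanSpace.inner_single_left]

theorem norm_swapDir_sq (h : l ≠ l') : ‖swapDir l l'‖ ^ 2 = 2 := by
  rw [← real_inner_self_eq_norm_sq, inner_swapDir_left, swapDir_apply, swapDir_apply]
  norm_num [h, h.symm]

theorem sum_swapDir : ∑ k, swapDir l l' k = 0 := by
  simp [swapDir_apply, Finset.sum_sub_distrib]

theorem right_mem_gapSwap : l' ∈ GapSwap d m l l' :=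
  Finset.mem_insert_self _ _

theorem left_notMem_gapSwap (h : l ≠ l') : l ∉ GapSwap d m l l' := by
  simp [GapSwap, h]

theorem meanOn_gapSwap (hl : (l : ℕ) < m) (hl' : m ≤ (l' : ℕ)) (a b : ℝ) :
    meanOn (GapSwap d m l l') a b = meanOn (Im d m) a b + (a - b) • swapDir l l' := by
  have hll' := ne_of_val_lt_of_le hl hl'
  ext k
  simp only [PiLp.add_apply, PiLp.smul_apply, meanOn_apply, swapDir_apply, smul_eq_mul,
    GapSwap, Finset.mem_insert, Finset.mem_sdiff, Finset.mem_singleton, mem_Im]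
  by_cases hk : k = l'
  · subst hk; simp [hll'.symm, not_lt.2 hl']
  by_cases hk' : k = l
  · subst hk'; simp [hl, hll']
  · simp [hk, hk']

theorem GapFeas2.eq_smul_swapDir {P : Measure Ω} {X : ℕ → Ω → Vec d} {θ : Vec d}
    (h : GapFeas2 P X l l' θ) : θ = θ l' • swapDir l l' := by
  obtain ⟨-, -, hsum, -, -, hsupp⟩ := h
  ext k
  simp only [PiLp.smul_apply, swapDir_apply, smul_eq_mul]
  by_cases hk' : k = l'
  · subst hk'
    by_cases hk : k = l
    · subst hk; simp only [if_true, sub_self, mul_zero]; linarith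
    · simp [hk]
  by_cases hk : k = l
  · subst hk; simp only [if_neg hk', if_true]; linarith
  · simp [hk, hk', hsupp k hk hk']

end GapGeometry

/-- `Λ` is the cumulant generating function of `N(μ, s I + τ 𝟙𝟙ᵀ)`: the equicorrelated model with
variance `σ²` and correlation `ρ` has `s = σ²(1 - ρ)` and `τ = σ²ρ`. -/
def HasEquicorrGaussianCgf (P : Measure Ω) (X : ℕ → Ω → Vec d) (μ : Vec d) (s τ : ℝ) : Prop :=
  ∀ θ, InDom P X θ ∧ cgf P X θ = ⟪θ, μ⟫ + s / 2 * ‖θ‖ ^ 2 + τ / 2 * (∑ k, θ k) ^ 2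

section GaussianGapSwap

variable {P : Measure Ω} {X : ℕ → Ω → Vec d} {m : ℕ} {l l' : Fin d} {μp μm s τ : ℝ}

theorem HasEquicorrGaussianCgf.le_cgf {μ : Vec d} (h : HasEquicorrGaussianCgf P X μ s τ)
    (hτ : 0 ≤ τ) (θ : Vec d) : ⟪θ, μ⟫ + s / 2 * ‖θ‖ ^ 2 ≤ cgf P X θ := by
  rw [(h θ).2]
  exact le_add_of_nonneg_right (by positivity)

theorem half_mul_norm_smul_swapDir_sq (h : l ≠ l') (hs : s ≠ 0) (D : ℝ) :
    s / 2 * ‖(D / s) • swapDir l l'‖ ^ 2 = D / s * D := by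
  rw [norm_smul, mul_pow, norm_swapDir_sq h, Real.norm_eq_abs, sq_abs]
  field_simp

theorem cgf_smul_swapDir (h : HasEquicorrGaussianCgf P X (meanOn (Im d m) μp μm) s τ)
    (hl : (l : ℕ) < m) (hl' : m ≤ (l' : ℕ)) (hs : s ≠ 0) :
    cgf P X (((μp - μm) / s) • swapDir l l') = 0 := by
  have hsum : ∑ k, (((μp - μm) / s) • swapDir l l') k = 0 := by
    simp only [PiLp.smul_apply, smul_eq_mul, ← Finset.mul_sum, sum_swapDir, mul_zero]
  rw [(h _).2, add_assoc, half_mul_norm_smul_swapDir_sq (ne_of_val_lt_of_le hl hl') hs, hsum,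
    real_inner_smul_left, inner_swapDir_left]
  simp only [meanOn_apply, mem_Im, if_pos hl, if_neg (not_lt.2 hl')]
  ring

theorem meanOn_gapSwap_eq_add_smul (hl : (l : ℕ) < m) (hl' : m ≤ (l' : ℕ)) (hs : s ≠ 0) :
    meanOn (GapSwap d m l l') μp μm =
      meanOn (Im d m) μp μm + s • (((μp - μm) / s) • swapDir l l') := by
  rw [meanOn_gapSwap hl hl', smul_smul, mul_div_cancel₀ _ hs]

theorem inner_meanOn_gapSwap_le (h : HasEquicorrGaussianCgf P X (meanOn (Im d m) μp μm) s τ)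
    (hτ : 0 ≤ τ) (hl : (l : ℕ) < m) (hl' : m ≤ (l' : ℕ)) (hs : 0 < s) {θ : Vec d}
    (hθ : cgf P X θ ≤ 0) :
    ⟪θ, meanOn (GapSwap d m l l') μp μm⟫ ≤ (μp - μm) / s * (μp - μm) := by
  rw [meanOn_gapSwap_eq_add_smul hl hl' hs.ne',
    ← half_mul_norm_smul_swapDir_sq (ne_of_val_lt_of_le hl hl') hs.ne']
  exact inner_add_smul_le_of_nonpos _ hs.le ((h.le_cgf hτ θ).trans hθ)

theorem rOf_WGap_gapSwap (h : HasEquicorrGaussianCgf P X (meanOn (Im d m) μp μm) s τ)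
    (hτ : 0 ≤ τ) (hl : (l : ℕ) < m) (hl' : m ≤ (l' : ℕ)) (hs : 0 < s) (hD : 0 < μp - μm) :
    rOf P X (WGap (GapSwap d m l l')) = ENNReal.ofReal ((μp - μm) / s) := by
  refine rOf_eq_ofReal_of_ray hD (h _).1 (cgf_smul_swapDir h hl hl' hs.ne').le
    (fun x hx => ?_) (fun t => smul_meanOn_mem_WGap _ hD)
    (fun θ _ hθ => inner_meanOn_gapSwap_le h hτ hl hl' hs hθ)
  have hgap := hx l' right_mem_gapSwap l (left_notMem_gapSwap (ne_of_val_lt_of_le hl hl'))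
  rw [real_inner_smul_left, inner_swapDir_left]
  exact le_mul_of_one_le_right (div_pos hD hs).le hgap.le

theorem eq_smul_swapDir_of_isOptTilt
    (h : HasEquicorrGaussianCgf P X (meanOn (Im d m) μp μm) s τ) (hτ : 0 ≤ τ)
    (hl : (l : ℕ) < m) (hl' : m ≤ (l' : ℕ)) (hs : 0 < s) (hD : 0 < μp - μm) {β : Vec d}
    (hβ : IsOptTilt P X (WGap (GapSwap d m l l')) β) :
    β = ((μp - μm) / s) • swapDir l l' := by
  refine eq_of_le_inner_add_smul hs ((h.le_cgf hτ β).trans hβ.2.1.le) ?_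
  rw [← meanOn_gapSwap_eq_add_smul hl hl' hs.ne',
    half_mul_norm_smul_swapDir_sq (ne_of_val_lt_of_le hl hl') hs.ne']
  exact le_inner_of_isOptTilt hD (div_pos hD hs).le hβ (rOf_WGap_gapSwap h hτ hl hl' hs hD)
    fun t => smul_meanOn_mem_WGap _ hD

theorem IsGapOpt2.eq_of_equicorrGaussian
    (h : HasEquicorrGaussianCgf P X (meanOn (Im d m) μp μm) s τ) (hτ : 0 ≤ τ)
    (hl : (l : ℕ) < m) (hl' : m ≤ (l' : ℕ)) (hs : 0 < s) (hD : 0 < μp - μm) {z : ℝ}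
    {γ : Vec d} (hz : IsGapOpt2 P X l l' z γ) :
    z = (μp - μm) / s ∧ γ = ((μp - μm) / s) • swapDir l l' := by
  obtain ⟨hγ, rfl, hmax⟩ := hz
  have hll' := ne_of_val_lt_of_le hl hl'
  have hc : 0 < (μp - μm) / s := div_pos hD hs
  have hle : γ l' ≤ (μp - μm) / s := by
    have hb := inner_meanOn_gapSwap_le h hτ hl hl' hs hγ.2.1
    rw [hγ.eq_smul_swapDir, real_inner_smul_left, inner_swapDir_left, meanOn_apply,
      meanOn_apply, if_pos right_mem_gapSwap, if_neg (left_notMem_gapSwap hll')] at hb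
    exact le_of_mul_le_mul_right hb hD
  have hge : (μp - μm) / s ≤ γ l' := by
    have := hmax _ ⟨(h _).1, (cgf_smul_swapDir h hl hl' hs.ne').le, by
      simp [swapDir_apply, hll', hll'.symm], by simp [swapDir_apply, hll', hc.le],
      by simp [swapDir_apply, hll'.symm, hc.le], fun k hk hk' => by simp [swapDir_apply, hk, hk']⟩
    simpa [swapDir_apply, hll'.symm] using this
  have hval := le_antisymm hle hge
  exact ⟨hval, hγ.eq_smul_swapDir.trans (by rw [hval])⟩

end GaussianGapSwap

theorem statement13_general
    {d : ℕ} {Ω : Type*} [MeasurableSpace Ω] (P : Measure Ω) (X : ℕ → Ω → Vec d)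
    (m : ℕ)
    (μp μm σ2 ρ : ℝ) (hμp : 0 < μp) (hμm : μm < 0) (hσ2 : 0 < σ2)
    (hρ0 : 0 ≤ ρ) (hρ1 : ρ < 1)
    -- `X₁` is multivariate normal with the given mean and covariance structure,
    -- characterized through its cumulant generating function
    (hcgf : ∀ θ : Vec d, InDom P X θ ∧
      cgf P X θ =
        (∑ k : Fin d, θ k * (if (k : ℕ) < m then μp else μm)) +
          (1 / 2) * (σ2 * ((1 - ρ) * ∑ k : Fin d, (θ k) ^ 2 + ρ * (∑ k : Fin d, θ k) ^ 2))
    )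
    (l l' : Fin d) (hl : (l : ℕ) < m) (hl' : m ≤ (l' : ℕ))
    (βA : Vec d) (hβA : IsOptTilt P X (WGap (GapSwap d m l l')) βA)
    (zt : ℝ) (γt : Vec d) (hzt : IsGapOpt2 P X l l' zt γt) :
    rOf P X (WGap (GapSwap d m l l')) = ENNReal.ofReal zt ∧
    βA = γt ∧
    γt l = -((μp - μm) / (σ2 * (1 - ρ))) ∧
    γt l' = (μp - μm) / (σ2 * (1 - ρ)) ∧
    ∀ k : Fin d, k ≠ l → k ≠ l' → γt k = 0 := by
  have hG : HasEquicorrGaussianCgf P X (meanOn (Im d m) μp μm) (σ2 * (1 - ρ)) (σ2 * ρ) :=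
    fun θ => ⟨(hcgf θ).1, by
      rw [(hcgf θ).2, inner_meanOn, EuclideanSpace.real_norm_sq_eq]
      simp only [mem_Im]
      ring⟩
  have hs : 0 < σ2 * (1 - ρ) := mul_pos hσ2 (sub_pos.2 hρ1)
  have hτ : 0 ≤ σ2 * ρ := mul_nonneg hσ2.le hρ0
  have hD : 0 < μp - μm := by linarith
  have hll' := ne_of_val_lt_of_le hl hl'
  obtain ⟨rfl, rfl⟩ := hzt.eq_of_equicorrGaussian hG hτ hl hl' hs hD
  refine ⟨rOf_WGap_gapSwap hG hτ hl hl' hs hD,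
    eq_smul_swapDir_of_isOptTilt hG hτ hl hl' hs hD hβA, by simp [swapDir_apply, hll'],
    by simp [swapDir_apply, hll'.symm], fun k hk hk' => by simp [swapDir_apply, hk, hk']⟩

theorem statement13
    {d : ℕ} {Ω : Type*} [MeasurableSpace Ω] (P : Measure Ω) (X : ℕ → Ω → Vec d)
    (m : ℕ) (hm2 : 2 ≤ m) (hmd : m + 2 ≤ d)
    (hiid : IIDWalk P X)
    (μp μm σ2 ρ : ℝ) (hμp : 0 < μp) (hμm : μm < 0) (hσ2 : 0 < σ2)
    (hρ0 : 0 ≤ ρ) (hρ1 : ρ < 1)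
    -- `X₁` is multivariate normal with the given mean and covariance structure,
    -- characterized through its cumulant generating function
    (hmean : ∀ k : Fin d, ∫ ω, X 0 ω k ∂P = if (k : ℕ) < m then μp else μm)
    (hcgf : ∀ θ : Vec d, InDom P X θ ∧
      cgf P X θ =
        (∑ k : Fin d, θ k * (if (k : ℕ) < m then μp else μm)) +
          (1 / 2) * (σ2 * ((1 - ρ) * ∑ k : Fin d, (θ k) ^ 2 + ρ * (∑ k : Fin d, θ k) ^ 2))
    )
    (l l' : Fin d) (hl : (l : ℕ) < m) (hl' : m ≤ (l' : ℕ))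
    (βA : Vec d) (hβA : IsOptTilt P X (WGap (GapSwap d m l l')) βA)
    (zt : ℝ) (γt : Vec d) (hzt : IsGapOpt2 P X l l' zt γt) :
    rOf P X (WGap (GapSwap d m l l')) = ENNReal.ofReal zt ∧
    βA = γt ∧
    γt l = -((μp - μm) / (σ2 * (1 - ρ))) ∧
    γt l' = (μp - μm) / (σ2 * (1 - ρ)) ∧
    ∀ k : Fin d, k ≠ l → k ≠ l' → γt k = 0 :=
  statement13_general P X m μp μm σ2 ρ hμp hμm hσ2 hρ0 hρ1 hcgf l l' hl hl' βA hβA zt γt hzt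

end Paper
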